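/- arXiv:1905.05554 — 5 statements merged into one kernel-verified Lean document; each statement's English description precedes it below -/
import Mathlib

section
/- The map θ̃ : [0,∞)² → ℝ × [0,∞) defined by θ̃(z) = z²/|z| (where z² is complex squaring and |z| the Euclidean norm, with θ̃(0) = 0) is a homeomorphism from the closed quadrant [0,∞)² onto the closed upper half-plane ℝ × [0,∞). -/
/-! In polar coordinates `θ̃ (r e^{iφ}) = r e^{2iφ}`: `θ̃` preserves the modulus and doubles the
argument, which maps `[0, π/2]` onto `[0, π]`. The inverse halves the argument; it is continuous on
the closed upper half-plane because `arg` is (on the negative real axis it is continuous from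
above), and both maps are continuous at `0` because they preserve the modulus. -/

open Complex Set
open scoped Real

theorem continuousAt_zero_of_norm_eq {E F : Type*} [SeminormedAddCommGroup E]
    [NormedAddCommGroup F] {f : E → F} (hf : ∀ x, ‖f x‖ = ‖x‖) : ContinuousAt f 0 := by
  have hf0 : f 0 = 0 := norm_eq_zero.1 (by simp [hf])
  refine continuousAt_of_locally_lipschitz one_pos 1 fun y _ => ?_
  simp [hf0, dist_eq_norm, hf]

theorem norm_sq_div_norm (z : ℂ) : ‖z ^ 2 / ‖z‖‖ = ‖z‖ := by
  rcases eq_or_ne z 0 with rfl | hz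
  · simp
  · rw [norm_div, norm_pow, norm_real, Real.norm_of_nonneg (norm_nonneg z), sq,
      mul_div_cancel_right₀ _ (norm_ne_zero_iff.2 hz)]

theorem continuous_sq_div_norm : Continuous fun z : ℂ => z ^ 2 / ‖z‖ := by
  refine continuous_iff_continuousAt.2 fun z => ?_
  rcases eq_or_ne z 0 with rfl | hz
  · exact continuousAt_zero_of_norm_eq norm_sq_div_norm
  · exact (continuousAt_id.pow 2).div (by fun_prop) (ofReal_ne_zero.2 (norm_ne_zero_iff.2 hz))

theorem arg_real_mul_exp_mul_I {r θ : ℝ} (hr : 0 < r) (hθ : θ ∈ Ioc (-π) π) :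
    arg (r * exp (θ * I)) = θ := by
  rw [arg_real_mul _ hr, arg_exp_mul_I, toIocMod_eq_self]
  simpa [two_mul, ← sub_eq_add_neg] using hθ

theorem sq_div_norm_eq_norm_mul_exp (z : ℂ) : z ^ 2 / ‖z‖ = ‖z‖ * exp (↑(2 * arg z) * I) := by
  rcases eq_or_ne z 0 with rfl | hz
  · simp
  · have hsq : z ^ 2 = ‖z‖ * (‖z‖ * exp (↑(2 * arg z) * I)) := by
      conv_lhs => rw [← norm_mul_exp_arg_mul_I z]
      rw [mul_pow, ← exp_nat_mul, sq, mul_assoc]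
      push_cast
      rw [← mul_assoc (2 : ℂ)]
    rw [hsq, mul_div_cancel_left₀ _ (ofReal_ne_zero.2 (norm_ne_zero_iff.2 hz))]

theorem arg_sq_div_norm {z : ℂ} (h : arg z ∈ Ioc (-(π / 2)) (π / 2)) :
    arg (z ^ 2 / ‖z‖) = 2 * arg z := by
  rcases eq_or_ne z 0 with rfl | hz
  · simp
  · rw [sq_div_norm_eq_norm_mul_exp, arg_real_mul_exp_mul_I (norm_pos_iff.2 hz)]
    constructor <;> linarith [h.1, h.2]

theorem im_sq_div_norm_nonneg {z : ℂ} (hre : 0 ≤ z.re) (him : 0 ≤ z.im) :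
    0 ≤ (z ^ 2 / ‖z‖).im := by
  rw [div_ofReal_im, sq, mul_im]
  positivity

noncomputable def halveArg (w : ℂ) : ℂ := ‖w‖ * exp (↑(arg w / 2) * I)

theorem norm_halveArg (w : ℂ) : ‖halveArg w‖ = ‖w‖ := by
  rw [halveArg, norm_mul, norm_exp_ofReal_mul_I, norm_real, norm_norm, mul_one]

theorem arg_halveArg (w : ℂ) : arg (halveArg w) = arg w / 2 := by
  rcases eq_or_ne w 0 with rfl | hw
  · simp [halveArg]
  · rw [halveArg, arg_real_mul_exp_mul_I (norm_pos_iff.2 hw)]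
    constructor <;> linarith [neg_pi_lt_arg w, arg_le_pi w, Real.pi_pos]

theorem halveArg_sq_div_norm {z : ℂ} (h : arg z ∈ Ioc (-(π / 2)) (π / 2)) :
    halveArg (z ^ 2 / ‖z‖) = z :=
  ext_norm_arg (by rw [norm_halveArg, norm_sq_div_norm])
    (by rw [arg_halveArg, arg_sq_div_norm h, mul_div_cancel_left₀ _ two_ne_zero])

theorem sq_div_norm_halveArg (w : ℂ) : halveArg w ^ 2 / ‖halveArg w‖ = w := by
  have h : arg (halveArg w) ∈ Ioc (-(π / 2)) (π / 2) := by
    rw [arg_halveArg]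
    constructor <;> linarith [neg_pi_lt_arg w, arg_le_pi w]
  exact ext_norm_arg (by rw [norm_sq_div_norm, norm_halveArg])
    (by rw [arg_sq_div_norm h, arg_halveArg, mul_div_cancel₀ _ two_ne_zero])

theorem re_nonneg_and_im_nonneg_iff {z : ℂ} : 0 ≤ z.re ∧ 0 ≤ z.im ↔ arg z ∈ Icc 0 (π / 2) := by
  rw [← abs_arg_le_pi_div_two_iff, ← arg_nonneg_iff, abs_le, mem_Icc]
  constructor
  · rintro ⟨⟨-, h⟩, h'⟩; exact ⟨h', h⟩
  · rintro ⟨h', h⟩; exact ⟨⟨by linarith [Real.pi_pos], h⟩, h'⟩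

theorem continuousWithinAt_arg_upperHalfPlane {w : ℂ} (hw : w ≠ 0) :
    ContinuousWithinAt arg {z | 0 ≤ z.im} w := by
  by_cases hs : w ∈ slitPlane
  · exact (continuousAt_arg hs).continuousWithinAt
  · obtain ⟨hre, him⟩ : w.re ≤ 0 ∧ w.im = 0 := by simpa [mem_slitPlane_iff] using hs
    refine continuousWithinAt_arg_of_re_neg_of_im_zero (hre.lt_of_ne fun h => hw ?_) him
    exact Complex.ext h him

theorem continuousOn_halveArg : ContinuousOn halveArg {w | 0 ≤ w.im} := by
  intro w hw
  rcases eq_or_ne w 0 with rfl | hw0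
  · exact (continuousAt_zero_of_norm_eq norm_halveArg).continuousWithinAt
  · unfold halveArg
    have := continuousWithinAt_arg_upperHalfPlane hw0
    fun_prop

/-- The map `θ̃ z = z² / |z|` (with `θ̃ 0 = 0`) is a homeomorphism from the closed
quadrant `{z : ℂ | 0 ≤ Re z, 0 ≤ Im z}` onto the closed upper half-plane `{z | 0 ≤ Im z}`. -/
theorem stmt0 :
    ∃ e : {z : ℂ // 0 ≤ z.re ∧ 0 ≤ z.im} ≃ₜ {z : ℂ // 0 ≤ z.im},
      ∀ z : {z : ℂ // 0 ≤ z.re ∧ 0 ≤ z.im}, (e z : ℂ) = (z : ℂ) ^ 2 / (‖(z : ℂ)‖ : ℂ) := by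
  have arg_mem {z : ℂ} (hz : 0 ≤ z.re ∧ 0 ≤ z.im) : arg z ∈ Ioc (-(π / 2)) (π / 2) := by
    obtain ⟨h₀, h₁⟩ := re_nonneg_and_im_nonneg_iff.1 hz
    exact ⟨by linarith [Real.pi_pos], h₁⟩
  have halveArg_mem {w : ℂ} (hw : 0 ≤ w.im) : 0 ≤ (halveArg w).re ∧ 0 ≤ (halveArg w).im := by
    rw [re_nonneg_and_im_nonneg_iff, arg_halveArg]
    constructor <;> linarith [arg_nonneg_iff.2 hw, arg_le_pi w]
  refine ⟨{ toFun z := ⟨z ^ 2 / ‖(z : ℂ)‖, im_sq_div_norm_nonneg z.2.1 z.2.2⟩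
            invFun w := ⟨halveArg w, halveArg_mem w.2⟩
            left_inv z := Subtype.ext (halveArg_sq_div_norm (arg_mem z.2))
            right_inv w := Subtype.ext (sq_div_norm_halveArg w)
            continuous_toFun := (continuous_sq_div_norm.comp continuous_subtype_val).subtype_mk _
            continuous_invFun := (continuousOn_halveArg.comp_continuous continuous_subtype_val
              fun w => w.2).subtype_mk _ }, fun _ => rfl⟩
end

section
/- The map θ̃(z) = z²/|z| restricts to a diffeomorphism from [0,∞)² \ {0} onto (ℝ × [0,∞)) \ {0}, and the pushforward of the standard area form ω₀ = dx ∧ dy under this restriction equals ω₀/2. -/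
open Set

section ThetaAux

open Complex

/-- Explicit inverse of `z ↦ z²/|z|` on the closed upper half-plane. -/
noncomputable def gmAux : ℂ → ℂ := fun w =>
  (Real.sqrt ‖w‖ / (2 * Real.sqrt (‖w‖ + w.im))) •
    (((w.re + w.im + ‖w‖ : ℝ) : ℂ) + ((w.im + ‖w‖ - w.re : ℝ) : ℂ) * Complex.I)

lemma normSqEqAux (w : ℂ) : ‖w‖ ^ 2 = w.re ^ 2 + w.im ^ 2 := by
  rw [Complex.sq_norm, Complex.normSq_apply]; ring

lemma gmAux_sq {w : ℂ} (hw : w ≠ 0) (him : 0 ≤ w.im) : gmAux w ^ 2 = w * (‖w‖ : ℂ) := by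
  have hr : 0 < ‖w‖ := norm_pos_iff.mpr hw
  have hry : 0 < ‖w‖ + w.im := by positivity
  have h1 : Real.sqrt ‖w‖ ^ 2 = ‖w‖ := Real.sq_sqrt hr.le
  have h2 : Real.sqrt (‖w‖ + w.im) ^ 2 = ‖w‖ + w.im := Real.sq_sqrt hry.le
  have h3 := normSqEqAux w
  have h2' : Real.sqrt (‖w‖ + w.im) ≠ 0 := by positivity
  have hc2 : (((w.re + w.im + ‖w‖ : ℝ) : ℂ) + ((w.im + ‖w‖ - w.re : ℝ) : ℂ) * Complex.I) ^ 2
      = ((4 * (w.im + ‖w‖)) : ℝ) • w := by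
    rw [Complex.ext_iff]
    constructor <;> simp [pow_two, Complex.real_smul] <;> nlinarith [h3]
  rw [gmAux, smul_pow, hc2, smul_smul]
  have hs2 : (Real.sqrt ‖w‖ / (2 * Real.sqrt (‖w‖ + w.im))) ^ 2 * (4 * (w.im + ‖w‖)) = ‖w‖ := by
    rw [div_pow, mul_pow, h1, h2]
    field_simp
    ring
  rw [hs2, Complex.real_smul, mul_comm]

lemma gmAux_norm {w : ℂ} (hw : w ≠ 0) (him : 0 ≤ w.im) : ‖gmAux w‖ = ‖w‖ := by
  have h : ‖gmAux w‖ ^ 2 = ‖w‖ ^ 2 := by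
    have := congrArg norm (gmAux_sq hw him)
    rwa [norm_pow, norm_mul, Complex.norm_real, Real.norm_eq_abs, abs_norm, ← pow_two] at this
  have h1 : (0:ℝ) ≤ ‖gmAux w‖ := norm_nonneg _
  have h2 : (0:ℝ) ≤ ‖w‖ := norm_nonneg _
  nlinarith [h, h1, h2]

lemma gmAux_ne {w : ℂ} (hw : w ≠ 0) (him : 0 ≤ w.im) : gmAux w ≠ 0 := by
  intro h
  have this := gmAux_sq hw him
  rw [h] at this
  rcases mul_eq_zero.mp ((zero_pow (two_ne_zero)).symm.trans this).symm with h' | h'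
  · exact hw h'
  · exact (norm_pos_iff.mpr hw).ne' (by exact_mod_cast h')

lemma f_gmAux {w : ℂ} (hw : w ≠ 0) (him : 0 ≤ w.im) : gmAux w ^ 2 / (‖gmAux w‖ : ℂ) = w := by
  rw [gmAux_sq hw him, gmAux_norm hw him]
  have hr : (‖w‖ : ℂ) ≠ 0 := by simpa using (norm_pos_iff.mpr hw).ne'
  exact mul_div_cancel_right₀ w hr

lemma gmAux_mem {w : ℂ} (hw : w ≠ 0) (him : 0 ≤ w.im) :
    0 ≤ (gmAux w).re ∧ 0 ≤ (gmAux w).im := by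
  have hr : 0 < ‖w‖ := norm_pos_iff.mpr hw
  have hry : 0 < ‖w‖ + w.im := by positivity
  have hs : 0 ≤ Real.sqrt ‖w‖ / (2 * Real.sqrt (‖w‖ + w.im)) := by positivity
  have hxr : |w.re| ≤ ‖w‖ := by
    exact Complex.abs_re_le_norm w
  have h1 : 0 ≤ w.re + w.im + ‖w‖ := by
    have := neg_abs_le w.re; linarith
  have h2 : 0 ≤ w.im + ‖w‖ - w.re := by
    have := le_abs_self w.re; linarith
  constructor <;>
  · simp only [gmAux, Complex.real_smul, Complex.mul_re, Complex.mul_im, Complex.add_re,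
      Complex.add_im, Complex.ofReal_re, Complex.ofReal_im, Complex.I_re, Complex.I_im]
    ring_nf
    have e : (0:ℝ) ≤ Real.sqrt ‖w‖ * (Real.sqrt (‖w‖+w.im))⁻¹ := by positivity
    nlinarith [mul_nonneg e h1, mul_nonneg e h2]

lemma detHelperAux (D : ℂ →L[ℝ] ℂ) :
    LinearMap.det (D.toLinearMap) = (D 1).re * (D I).im - (D I).re * (D 1).im := by
  rw [← LinearMap.det_toMatrix Complex.basisOneI, Matrix.det_fin_two]
  simp [LinearMap.toMatrix_apply, Complex.coe_basisOneI, Complex.coe_basisOneI_repr]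

set_option maxHeartbeats 1000000 in
lemma existsDerivAux {z : ℂ} (hz : z ≠ 0) :
    ∃ D : ℂ →L[ℝ] ℂ, HasFDerivAt (fun w : ℂ => w ^ 2 / (‖w‖ : ℂ)) D z ∧
      LinearMap.det D.toLinearMap = 2 := by
  have hr : 0 < ‖z‖ := norm_pos_iff.mpr hz
  have hq0 : z.re * z.re + z.im * z.im ≠ 0 := by
    have := norm_pos_iff.mpr hz
    intro h
    have : z.re = 0 ∧ z.im = 0 := by constructor <;> nlinarith [sq_nonneg z.re, sq_nonneg z.im]
    exact hz (Complex.ext this.1 this.2)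
  have hre : HasFDerivAt (fun w : ℂ => w.re) (Complex.reCLM : ℂ →L[ℝ] ℝ) z :=
    Complex.reCLM.hasFDerivAt
  have him : HasFDerivAt (fun w : ℂ => w.im) (Complex.imCLM : ℂ →L[ℝ] ℝ) z :=
    Complex.imCLM.hasFDerivAt
  have hmul : HasFDerivAt (fun w : ℂ => w.re * w.re + w.im * w.im)
      ((z.re • Complex.reCLM + z.re • Complex.reCLM) +
        (z.im • Complex.imCLM + z.im • Complex.imCLM)) z := (hre.mul hre).add (him.mul him)
  have hsqrt : HasDerivAt Real.sqrt (1 / (2 * Real.sqrt (z.re * z.re + z.im * z.im)))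
      (z.re * z.re + z.im * z.im) := Real.hasDerivAt_sqrt hq0
  have hnorm0 := hsqrt.comp_hasFDerivAt z hmul
  have hfun : (fun w : ℂ => ‖w‖) = fun w : ℂ => Real.sqrt (w.re * w.re + w.im * w.im) := by
    funext w
    rw [Complex.norm_def, Complex.normSq_apply]
  have hsq : Real.sqrt (z.re * z.re + z.im * z.im) = ‖z‖ := by
    rw [Complex.norm_def, Complex.normSq_apply]
  have hnorm : HasFDerivAt (fun w : ℂ => ‖w‖)
      ((1 / (2 * ‖z‖)) • ((z.re • Complex.reCLM + z.re • Complex.reCLM) +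
        (z.im • Complex.imCLM + z.im • Complex.imCLM))) z := by
    rw [hfun, ← hsq]; exact hnorm0
  have hninv : HasFDerivAt (fun w : ℂ => ‖w‖⁻¹)
      ((-(‖z‖ ^ 2)⁻¹) • ((1 / (2 * ‖z‖)) • ((z.re • Complex.reCLM + z.re • Complex.reCLM) +
        (z.im • Complex.imCLM + z.im • Complex.imCLM)))) z :=
    (hasDerivAt_inv hr.ne').comp_hasFDerivAt z hnorm
  have hpow : HasFDerivAt (fun w : ℂ => w ^ 2)
      ((ContinuousLinearMap.smulRight (1 : ℂ →L[ℂ] ℂ) ((2 : ℕ) * z ^ 1)).restrictScalars ℝ) z :=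
    ((hasDerivAt_pow 2 z).hasFDerivAt).restrictScalars ℝ
  have hsmul := hninv.smul hpow
  have hfeq : (fun w : ℂ => w ^ 2 / (‖w‖ : ℂ)) = fun w : ℂ => ‖w‖⁻¹ • w ^ 2 := by
    funext w
    rw [Complex.real_smul, Complex.ofReal_inv]
    ring
  refine ⟨_, hfeq ▸ (show HasFDerivAt (fun w : ℂ => ‖w‖⁻¹ • w ^ 2) _ z from hsmul), ?_⟩
  rw [detHelperAux]
  have h3 : ‖z‖ ^ 2 = z.re ^ 2 + z.im ^ 2 := normSqEqAux z
  simp only [ContinuousLinearMap.add_apply, ContinuousLinearMap.smul_apply,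
    ContinuousLinearMap.smulRight_apply, ContinuousLinearMap.coe_restrictScalars',
    ContinuousLinearMap.one_apply, Complex.reCLM_apply, Complex.imCLM_apply,
    Complex.one_re, Complex.one_im, Complex.I_re, Complex.I_im]
  simp only [smul_eq_mul, Complex.real_smul, Complex.smul_re, Complex.smul_im]
  simp only [Complex.add_re, Complex.add_im, Complex.mul_re, Complex.mul_im,
    Complex.ofReal_re, Complex.ofReal_im, Complex.I_re, Complex.I_im]
  have hx : (z ^ 2).re = z.re ^ 2 - z.im ^ 2 := by
    rw [pow_two]; simp [Complex.mul_re]; ring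
  have hy : (z ^ 2).im = 2 * z.re * z.im := by
    rw [pow_two]; simp [Complex.mul_im]; ring
  rw [hx, hy]
  have ha : ‖z‖ ≠ 0 := by simpa using hz
  have h3' : ‖z‖ ^ 2 = z.re ^ 2 + z.im ^ 2 := by
    exact h3
  field_simp
  simp only [Complex.one_re, Complex.natCast_re, Complex.natCast_im, Nat.cast_ofNat,
    Complex.re_ofNat, Complex.im_ofNat, Complex.one_im]
  linear_combination (-((8*‖z‖^4-4*‖z‖^2)*(z.re^2+z.im^2+‖z‖^2) + 8*‖z‖^4 - 16*‖z‖^6)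
    - 8*‖z‖^4*(‖z‖^2 - z.re^2 - z.im^2)) * h3'

lemma injOnAux :
    Set.InjOn (fun z : ℂ => z ^ 2 / (‖z‖ : ℂ)) ({z : ℂ | 0 ≤ z.re ∧ 0 ≤ z.im} \ {0}) := by
  rintro z ⟨⟨hx, hy⟩, hz0⟩ z' ⟨⟨hx', hy'⟩, hz0'⟩ h
  simp only [mem_singleton_iff] at hz0 hz0'
  have hz : z ≠ 0 := hz0
  have hz' : z' ≠ 0 := hz0'
  have fnorm : ∀ w : ℂ, w ≠ 0 → ‖w ^ 2 / (‖w‖ : ℂ)‖ = ‖w‖ := by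
    intro w hw
    have hr : 0 < ‖w‖ := norm_pos_iff.mpr hw
    rw [norm_div, norm_pow, Complex.norm_real, norm_norm, pow_two,
      mul_div_assoc, div_self hr.ne', mul_one]
  have hn : ‖z‖ = ‖z'‖ := by
    have := congrArg norm h
    rwa [fnorm z hz, fnorm z' hz'] at this
  have hr : (‖z‖ : ℂ) ≠ 0 := by simpa using (norm_pos_iff.mpr hz).ne'
  have hsq : z ^ 2 = z' ^ 2 := by
    have h2 : z ^ 2 / (‖z‖ : ℂ) = z' ^ 2 / (‖z‖ : ℂ) := by
      simp only at h
      rw [h, hn]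
    rw [div_eq_div_iff hr hr] at h2
    exact mul_right_cancel₀ hr h2
  have : (z - z') * (z + z') = 0 := by ring_nf; linear_combination hsq
  rcases mul_eq_zero.mp this with h1 | h1
  · exact sub_eq_zero.mp h1
  · exfalso
    have hre : z.re = -z'.re := by
      have := congrArg Complex.re h1
      simp [Complex.add_re] at this
      linarith
    have him : z.im = -z'.im := by
      have := congrArg Complex.im h1
      simp [Complex.add_im] at this
      linarith
    have : z = 0 := by
      apply Complex.ext <;> simp <;> nlinarith
    exact hz this

lemma smoothFAux : ContDiffOn ℝ (⊤ : ℕ∞) (fun z : ℂ => z ^ 2 / (‖z‖ : ℂ))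
    ({z : ℂ | 0 ≤ z.re ∧ 0 ≤ z.im} \ {0}) := by
  intro z hz
  have h0 : z ≠ 0 := hz.2
  apply ContDiffAt.contDiffWithinAt
  have hn : ContDiffAt ℝ (⊤ : ℕ∞) (fun w : ℂ => ((‖w‖ : ℝ) : ℂ)) z :=
    Complex.ofRealCLM.contDiff.contDiffAt.comp z (contDiffAt_norm ℂ h0)
  have hne : ((‖z‖ : ℝ) : ℂ) ≠ 0 := by simpa using (norm_pos_iff.mpr h0).ne'
  simp only [div_eq_mul_inv]
  exact (contDiffAt_id.pow 2).mul (hn.inv hne)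

lemma smoothGAux : ContDiffOn ℝ (⊤ : ℕ∞) gmAux ({z : ℂ | 0 ≤ z.im} \ {0}) := by
  intro w hw
  have h0 : w ≠ 0 := hw.2
  have him : 0 ≤ w.im := hw.1
  have hr : 0 < ‖w‖ := norm_pos_iff.mpr h0
  have hry : 0 < ‖w‖ + w.im := by positivity
  apply ContDiffAt.contDiffWithinAt
  have hn : ContDiffAt ℝ (⊤ : ℕ∞) (fun v : ℂ => ‖v‖) w := contDiffAt_norm ℂ h0
  have hre : ContDiffAt ℝ (⊤ : ℕ∞) (fun v : ℂ => v.re) w := Complex.reCLM.contDiff.contDiffAt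
  have him' : ContDiffAt ℝ (⊤ : ℕ∞) (fun v : ℂ => v.im) w := Complex.imCLM.contDiff.contDiffAt
  have hs : ContDiffAt ℝ (⊤ : ℕ∞)
      (fun v : ℂ => Real.sqrt ‖v‖ / (2 * Real.sqrt (‖v‖ + v.im))) w := by
    apply ContDiffAt.div
    · exact hn.sqrt hr.ne'
    · exact contDiffAt_const.mul ((hn.add him').sqrt hry.ne')
    · have : Real.sqrt (‖w‖ + w.im) ≠ 0 := by positivity
      positivity
  have hvec : ContDiffAt ℝ (⊤ : ℕ∞) (fun v : ℂ =>
      (((v.re + v.im + ‖v‖ : ℝ) : ℂ) + ((v.im + ‖v‖ - v.re : ℝ) : ℂ) * Complex.I)) w := by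
    apply ContDiffAt.add
    · exact Complex.ofRealCLM.contDiff.contDiffAt.comp w ((hre.add him').add hn)
    · exact (Complex.ofRealCLM.contDiff.contDiffAt.comp w ((him'.add hn).sub hre)).mul
        contDiffAt_const
  exact hs.smul hvec

lemma uniqueDiffAux : UniqueDiffOn ℝ ({z : ℂ | 0 ≤ z.re ∧ 0 ≤ z.im} \ {0}) := by
  have hconv : Convex ℝ {z : ℂ | 0 ≤ z.re ∧ 0 ≤ z.im} := by
    have h1 : Convex ℝ (Complex.reCLM ⁻¹' (Ici (0:ℝ))) :=
      (convex_Ici (0:ℝ)).linear_preimage (Complex.reCLM : ℂ →L[ℝ] ℝ).toLinearMap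
    have h2 : Convex ℝ (Complex.imCLM ⁻¹' (Ici (0:ℝ))) :=
      (convex_Ici (0:ℝ)).linear_preimage (Complex.imCLM : ℂ →L[ℝ] ℝ).toLinearMap
    have : {z : ℂ | 0 ≤ z.re ∧ 0 ≤ z.im}
        = Complex.reCLM ⁻¹' (Ici (0:ℝ)) ∩ Complex.imCLM ⁻¹' (Ici (0:ℝ)) := by
      ext z; simp [Complex.reCLM_apply, Complex.imCLM_apply]
    rw [this]
    exact h1.inter h2
  have hint : (interior {z : ℂ | 0 ≤ z.re ∧ 0 ≤ z.im}).Nonempty := by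
    refine ⟨1 + Complex.I, ?_⟩
    rw [mem_interior]
    refine ⟨{z : ℂ | 0 < z.re ∧ 0 < z.im}, ?_, ?_, ?_⟩
    · intro z hz; exact ⟨hz.1.le, hz.2.le⟩
    · exact (isOpen_Ioi.preimage Complex.continuous_re).inter
        (isOpen_Ioi.preimage Complex.continuous_im)
    · simp
  have hQ := uniqueDiffOn_convex hconv hint
  intro z hz
  have h := (hQ z hz.1).inter (isOpen_compl_singleton.mem_nhds hz.2)
  rwa [← diff_eq] at h

end ThetaAux

/-- `θ̃ z = z²/|z|` restricts to a diffeomorphism from the punctured closed quadrant onto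
the punctured closed upper half-plane, and the pushforward of the standard area form
`ω₀` equals `ω₀/2`; equivalently, the real Jacobian determinant of `θ̃` equals `2`
at every point of the punctured quadrant. -/
theorem stmt1 :
    ∃ g : ℂ → ℂ,
      Set.BijOn (fun z : ℂ => z ^ 2 / (‖z‖ : ℂ))
        ({z : ℂ | 0 ≤ z.re ∧ 0 ≤ z.im} \ {0}) ({z : ℂ | 0 ≤ z.im} \ {0}) ∧
      Set.InvOn g (fun z : ℂ => z ^ 2 / (‖z‖ : ℂ))
        ({z : ℂ | 0 ≤ z.re ∧ 0 ≤ z.im} \ {0}) ({z : ℂ | 0 ≤ z.im} \ {0}) ∧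
      ContDiffOn ℝ (⊤ : ℕ∞) (fun z : ℂ => z ^ 2 / (‖z‖ : ℂ))
        ({z : ℂ | 0 ≤ z.re ∧ 0 ≤ z.im} \ {0}) ∧
      ContDiffOn ℝ (⊤ : ℕ∞) g ({z : ℂ | 0 ≤ z.im} \ {0}) ∧
      ∀ z ∈ ({z : ℂ | 0 ≤ z.re ∧ 0 ≤ z.im} \ {0}),
        LinearMap.det
          (fderivWithin ℝ (fun z : ℂ => z ^ 2 / (‖z‖ : ℂ))
            ({z : ℂ | 0 ≤ z.re ∧ 0 ≤ z.im} \ {0}) z).toLinearMap = 2 := by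
  have hmf : Set.MapsTo (fun z : ℂ => z ^ 2 / (‖z‖ : ℂ))
      ({z : ℂ | 0 ≤ z.re ∧ 0 ≤ z.im} \ {0}) ({z : ℂ | 0 ≤ z.im} \ {0}) := by
    rintro z ⟨⟨hx, hy⟩, hz0⟩
    simp only [mem_singleton_iff] at hz0
    have h0 : z ≠ 0 := hz0
    have hr : 0 < ‖z‖ := norm_pos_iff.mpr h0
    constructor
    · show 0 ≤ (z ^ 2 / ((‖z‖ : ℝ) : ℂ)).im
      rw [Complex.div_ofReal_im]
      have h2 : (z ^ 2).im = 2 * z.re * z.im := by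
        rw [pow_two]; simp [Complex.mul_im]; ring
      rw [h2]
      positivity
    · simp only [mem_singleton_iff]
      exact div_ne_zero (pow_ne_zero 2 h0) (by simpa using hr.ne')
  have hmg : Set.MapsTo gmAux ({z : ℂ | 0 ≤ z.im} \ {0})
      ({z : ℂ | 0 ≤ z.re ∧ 0 ≤ z.im} \ {0}) := by
    rintro w ⟨him, hw0⟩
    simp only [mem_singleton_iff] at hw0
    exact ⟨gmAux_mem hw0 him, by simpa using gmAux_ne hw0 him⟩
  have hright : ∀ w ∈ ({z : ℂ | 0 ≤ z.im} \ {0}),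
      (fun z : ℂ => z ^ 2 / (‖z‖ : ℂ)) (gmAux w) = w := by
    rintro w ⟨him, hw0⟩
    simp only [mem_singleton_iff] at hw0
    exact f_gmAux hw0 him
  have hleft : ∀ z ∈ ({z : ℂ | 0 ≤ z.re ∧ 0 ≤ z.im} \ {0}),
      gmAux ((fun z : ℂ => z ^ 2 / (‖z‖ : ℂ)) z) = z := by
    intro z hz
    have hfz := hmf hz
    have hgz := hmg hfz
    exact injOnAux hgz hz (hright _ hfz)
  have hinv : Set.InvOn gmAux (fun z : ℂ => z ^ 2 / (‖z‖ : ℂ))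
      ({z : ℂ | 0 ≤ z.re ∧ 0 ≤ z.im} \ {0}) ({z : ℂ | 0 ≤ z.im} \ {0}) :=
    ⟨hleft, hright⟩
  refine ⟨gmAux, hinv.bijOn hmf hmg, hinv, smoothFAux, smoothGAux, ?_⟩
  intro z hz
  have h0 : z ≠ 0 := by simpa using hz.2
  obtain ⟨D, hD, hdet⟩ := existsDerivAux h0
  rw [(hD.hasFDerivWithinAt).fderivWithin (uniqueDiffAux z hz)]
  exact hdet
end

section
/- Let c ≥ 1, Ψ(q¹, p₁, q², p₂) = (q¹ − c·q², p₁, q², c·p₁ + p₂), and π : ℝ⁴ → (ℝ/ℤ) × ℝ × ℝ × (ℝ/cℤ) the canonical projection. For every Q² ∈ (0,1) and P̄₂ ∈ ℝ/cℤ, the section U_{Q²,P̄₂} = { (Q̄¹, P₁) ∈ (ℝ/ℤ) × (0,1) : (Q̄¹, P₁, Q², P̄₂) ∈ (π∘Ψ)((0,1)⁴) } equals the product V_{Q²} × W_{P̄₂}, where V_{Q²} = (ℝ/ℤ) \ {−c·Q² + ℤ} and W_{P̄₂} = { P₁ ∈ (0,1) : ∃ p₂ ∈ (0,1), c·P₁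 + p₂ + cℤ = P̄₂ }. -/
/-!
Fixing `q² = Q²` decouples the coordinates: `P₁ = p₁`, the condition on `P̄₂` involves only
`p₁` and `p₂`, and `Q̄¹ = q¹ - c Q²` with `q¹` free in `(0,1)`. A period-long open interval
projects onto the circle minus the image of its endpoint, which gives `V_{Q²}`.
-/

open Set

lemma AddCircle.coe_image_Ioo_eq {p : ℝ} [Fact (0 < p)] (a : ℝ) :
    ((↑) : ℝ → AddCircle p) '' Ioo a (a + p) = {(a : AddCircle p)}ᶜ :=
  (AddCircle.openPartialHomeomorphCoe p a).image_source_eq_target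

lemma AddCircle.coe_add_const_image_Ioo_eq {p : ℝ} [Fact (0 < p)] (a b : ℝ) :
    (fun x : ℝ ↦ ((x + b : ℝ) : AddCircle p)) '' Ioo a (a + p) =
      {((a + b : ℝ) : AddCircle p)}ᶜ := by
  rw [← AddCircle.coe_image_Ioo_eq, add_right_comm, ← image_add_const_Ioo, image_image]

theorem stmt7_general (c : ℝ) (Q2 : ℝ) (hQ2 : Q2 ∈ Ioo (0:ℝ) 1) (P2 : AddCircle c) :
    {y : AddCircle (1:ℝ) × ℝ | y.2 ∈ Ioo (0:ℝ) 1 ∧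
        ∃ x ∈ Ioo (0:ℝ) 1 ×ˢ Ioo (0:ℝ) 1 ×ˢ Ioo (0:ℝ) 1 ×ˢ Ioo (0:ℝ) 1,
          (((x.1 - c * x.2.2.1 : ℝ) : AddCircle (1:ℝ)), x.2.1, x.2.2.1,
            ((c * x.2.1 + x.2.2.2 : ℝ) : AddCircle c))
            = (y.1, y.2, Q2, P2)}
      = (({((-(c * Q2) : ℝ) : AddCircle (1:ℝ))} : Set (AddCircle (1:ℝ)))ᶜ) ×ˢ
        {P1 : ℝ | P1 ∈ Ioo (0:ℝ) 1 ∧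
          ∃ p2 ∈ Ioo (0:ℝ) 1, ((c * P1 + p2 : ℝ) : AddCircle c) = P2} := by
  have hV : (fun q : ℝ ↦ ((q - c * Q2 : ℝ) : AddCircle (1:ℝ))) '' Ioo 0 1 =
      {((-(c * Q2) : ℝ) : AddCircle (1:ℝ))}ᶜ := by
    simpa only [zero_add, sub_eq_add_neg] using
      AddCircle.coe_add_const_image_Ioo_eq (p := 1) 0 (-(c * Q2))
  ext ⟨Q1, P1⟩
  rw [mem_prod, ← hV]
  simp only [mem_ofPred_eq, mem_image, Prod.mk.injEq]
  constructor
  · rintro ⟨hP1, ⟨q1, p1, q2, p2⟩, ⟨hq1, -, -, hp2⟩, hQ1, rfl, rfl, hP2⟩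
    exact ⟨⟨q1, hq1, hQ1⟩, hP1, p2, hp2, hP2⟩
  · rintro ⟨⟨q1, hq1, hQ1⟩, hP1, p2, hp2, hP2⟩
    exact ⟨hP1, ⟨q1, P1, Q2, p2⟩, ⟨hq1, hP1, hQ2, hp2⟩, hQ1, rfl, rfl, hP2⟩

/-- For `c ≥ 1`, `Q² ∈ (0,1)` and `P̄₂ ∈ ℝ/cℤ`, the section
`U = {(Q̄¹,P₁) ∈ (ℝ/ℤ)×(0,1) | (Q̄¹,P₁,Q²,P̄₂) ∈ (π∘Ψ)((0,1)⁴)}` equals the product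
`V_{Q²} × W_{P̄₂}` with `V_{Q²} = (ℝ/ℤ) \ {-c Q² + ℤ}` and
`W_{P̄₂} = {P₁ ∈ (0,1) | ∃ p₂ ∈ (0,1), c P₁ + p₂ ≡ P̄₂ mod cℤ}`. -/
theorem stmt7 (c : ℝ) (hc : 1 ≤ c) (Q2 : ℝ) (hQ2 : Q2 ∈ Ioo (0:ℝ) 1) (P2 : AddCircle c) :
    {y : AddCircle (1:ℝ) × ℝ | y.2 ∈ Ioo (0:ℝ) 1 ∧
        ∃ x ∈ Ioo (0:ℝ) 1 ×ˢ Ioo (0:ℝ) 1 ×ˢ Ioo (0:ℝ) 1 ×ˢ Ioo (0:ℝ) 1,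
          (((x.1 - c * x.2.2.1 : ℝ) : AddCircle (1:ℝ)), x.2.1, x.2.2.1,
            ((c * x.2.1 + x.2.2.2 : ℝ) : AddCircle c))
            = (y.1, y.2, Q2, P2)}
      = (({((-(c * Q2) : ℝ) : AddCircle (1:ℝ))} : Set (AddCircle (1:ℝ)))ᶜ) ×ˢ
        {P1 : ℝ | P1 ∈ Ioo (0:ℝ) 1 ∧
          ∃ p2 ∈ Ioo (0:ℝ) 1, ((c * P1 + p2 : ℝ) : AddCircle c) = P2} :=
  stmt7_general c Q2 hQ2 P2
end

section
/- Let c ≥ 1, Q² ∈ (0,1), P̄₂ ∈ ℝ/cℤ. The complement of U_{Q²,P̄₂} = V_{Q²} × W_{P̄₂} in the cylinder (ℝ/ℤ) × (0,1) is path-connected, where V_{Q²} = (ℝ/ℤ) \ {−c·Q² + ℤ} and W_{P̄₂} = { P₁ ∈ (0,1) : ∃ p₂ ∈ (0,1), c·P₁ + p₂ + cℤ = P̄₂ }. -/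
open Set

/-!
The complement is a comb: the spine `{a} × I` together with the full horizontal slices
`X × {y}` for the heights `y ∈ I \ W`. Every slice meets the spine, and the spine is
path-connected, so every point of the complement is joined to a base point on the spine.
-/

theorem isPathConnected_prod_diff_compl_singleton_prod {X Y : Type*} [TopologicalSpace X]
    [TopologicalSpace Y] [PathConnectedSpace X] {I : Set Y} (hI : IsPathConnected I)
    (a : X) (W : Set Y) :
    IsPathConnected ((univ ×ˢ I) \ ({a}ᶜ ×ˢ W)) := by
  obtain ⟨y₀, hy₀⟩ := hI.nonempty
  have spine_subset : ({a} ×ˢ I : Set (X × Y)) ⊆ (univ ×ˢ I) \ ({a}ᶜ ×ˢ W) := by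
    rintro ⟨x, y⟩ ⟨rfl, hy⟩
    simp [hy]
  have joined_spine : ∀ y ∈ I, JoinedIn ((univ ×ˢ I) \ ({a}ᶜ ×ˢ W)) (a, y₀) (a, y) :=
    fun y hy ↦ (((isPathConnected_singleton a).prod hI).joinedIn (a, y₀) ⟨rfl, hy₀⟩ (a, y)
      ⟨rfl, hy⟩).mono spine_subset
  refine ⟨(a, y₀), spine_subset ⟨rfl, hy₀⟩, ?_⟩
  rintro ⟨x, y⟩ ⟨⟨-, hy⟩, hxy⟩
  by_cases hxa : x = a
  · exact hxa ▸ joined_spine y hy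
  have hyW : y ∉ W := fun hyW ↦ hxy ⟨hxa, hyW⟩
  have slice_subset : (univ ×ˢ {y} : Set (X × Y)) ⊆ (univ ×ˢ I) \ ({a}ᶜ ×ˢ W) := by
    rintro ⟨x', y'⟩ ⟨-, rfl⟩
    simp [hy, hyW]
  exact (joined_spine y hy).trans <|
    ((isPathConnected_univ.prod (isPathConnected_singleton y)).joinedIn (a, y) ⟨trivial, rfl⟩
      (x, y) ⟨trivial, rfl⟩).mono slice_subset

theorem stmt9_general (c : ℝ) (Q2 : ℝ) (P2 : AddCircle c) :
    IsPathConnected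
      (((univ : Set (AddCircle (1:ℝ))) ×ˢ Ioo (0:ℝ) 1) \
        ((({((-(c * Q2) : ℝ) : AddCircle (1:ℝ))} : Set (AddCircle (1:ℝ)))ᶜ) ×ˢ
          {P1 : ℝ | P1 ∈ Ioo (0:ℝ) 1 ∧
            ∃ p2 ∈ Ioo (0:ℝ) 1, ((c * P1 + p2 : ℝ) : AddCircle c) = P2})) :=
  isPathConnected_prod_diff_compl_singleton_prod
    ((convex_Ioo 0 1).isPathConnected (nonempty_Ioo.2 zero_lt_one)) _ _

/-- For `c ≥ 1`, `Q² ∈ (0,1)`, `P̄₂ ∈ ℝ/cℤ`, the complement of `U = V_{Q²} × W_{P̄₂}`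
in the open cylinder `(ℝ/ℤ) × (0,1)` is path-connected. -/
theorem stmt9 (c : ℝ) (hc : 1 ≤ c) (Q2 : ℝ) (hQ2 : Q2 ∈ Ioo (0:ℝ) 1) (P2 : AddCircle c) :
    IsPathConnected
      (((univ : Set (AddCircle (1:ℝ))) ×ˢ Ioo (0:ℝ) 1) \
        ((({((-(c * Q2) : ℝ) : AddCircle (1:ℝ))} : Set (AddCircle (1:ℝ)))ᶜ) ×ˢ
          {P1 : ℝ | P1 ∈ Ioo (0:ℝ) 1 ∧
            ∃ p2 ∈ Ioo (0:ℝ) 1, ((c * P1 + p2 : ℝ) : AddCircle c) = P2})) :=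
  stmt9_general c Q2 P2
end

section
/- Let c ≥ 1 and Ψ(q¹, p₁, q², p₂) = (q¹ − c·q², p₁, q², c·p₁ + p₂). For every fixed (Q², P₂) ∈ ℝ², the section { (Q¹, P₁) ∈ ℝ² : (Q¹, P₁, Q², P₂) ∈ Ψ((0,1)⁴) } has two-dimensional Lebesgue measure at most 1/c. -/
open Set MeasureTheory

/-! A point `(Q¹, P₁)` of the section comes from `q¹ = Q¹ + c Q²` and `p₂ = P₂ - c P₁`, both in
`(0,1)`, so the section lies in a rectangle with sides `1` and `1/c`. -/

theorem Real.volume_preimage_sub_mul_left (b : ℝ) {c : ℝ} (hc : c ≠ 0) (s : Set ℝ) :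
    volume ((fun p => b - c * p) ⁻¹' s) = ENNReal.ofReal |c⁻¹| * volume s := by
  have hcomp : (fun p => b - c * p) = (b + ·) ∘ ((-c) * ·) := by
    funext p; simp [sub_eq_add_neg]
  rw [hcomp, preimage_comp, Real.volume_preimage_mul_left (neg_ne_zero.mpr hc),
    measure_preimage_add, inv_neg, abs_neg]

theorem shear_image_section_subset (c Q2 P2 : ℝ) :
    {y : ℝ × ℝ | (y.1, y.2, Q2, P2) ∈
        (fun x : ℝ × ℝ × ℝ × ℝ =>
          (x.1 - c * x.2.2.1, x.2.1, x.2.2.1, c * x.2.1 + x.2.2.2)) ''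
          (Ioo (0:ℝ) 1 ×ˢ Ioo (0:ℝ) 1 ×ˢ Ioo (0:ℝ) 1 ×ˢ Ioo (0:ℝ) 1)}
      ⊆ ((· + c * Q2) ⁻¹' Ioo 0 1) ×ˢ ((fun p => P2 - c * p) ⁻¹' Ioo 0 1) := by
  rintro ⟨Q1, P1⟩ ⟨⟨q1, p1, q2, p2⟩, ⟨hq1, -, -, hp2⟩, heq⟩
  simp only [Prod.mk.injEq] at heq
  obtain ⟨rfl, rfl, rfl, rfl⟩ := heq
  constructor
  · simpa using hq1
  · simpa using hp2

/-- For `c ≥ 1` and the shear `Ψ(q¹,p₁,q²,p₂) = (q¹ - c q², p₁, q², c p₁ + p₂)`,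
every section `{(Q¹,P₁) | (Q¹,P₁,Q²,P₂) ∈ Ψ((0,1)⁴)}` has Lebesgue measure at most `1/c`. -/
theorem stmt15 (c : ℝ) (hc : 1 ≤ c) (Q2 P2 : ℝ) :
    volume {y : ℝ × ℝ | (y.1, y.2, Q2, P2) ∈
        (fun x : ℝ × ℝ × ℝ × ℝ =>
          (x.1 - c * x.2.2.1, x.2.1, x.2.2.1, c * x.2.1 + x.2.2.2)) ''
          (Ioo (0:ℝ) 1 ×ˢ Ioo (0:ℝ) 1 ×ˢ Ioo (0:ℝ) 1 ×ˢ Ioo (0:ℝ) 1)}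
      ≤ ENNReal.ofReal (1 / c) := by
  have hc0 : 0 < c := one_pos.trans_le hc
  calc _ ≤ volume (((· + c * Q2) ⁻¹' Ioo (0:ℝ) 1) ×ˢ ((fun p => P2 - c * p) ⁻¹' Ioo (0:ℝ) 1)) :=
        measure_mono (shear_image_section_subset c Q2 P2)
    _ = ENNReal.ofReal (1 / c) := by
        rw [Measure.volume_eq_prod, Measure.prod_prod,
          measure_preimage_add_right, Real.volume_preimage_sub_mul_left P2 hc0.ne',
          Real.volume_Ioo, abs_of_pos (inv_pos.mpr hc0)]
        simp
end
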